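/- Let n, m ∈ ℕ and let f : ℝ^{(n)} → ℝ^{(m)} be a function such that f(g ∘ x) = g ∘ f(x) for every order-preserving bijection g : ℝ → ℝ and every x ∈ ℝ^{(n)}. Then there exists a unique strictly monotone (order-preserving injective) map j : Fin m → Fin n such that f(x) = x ∘ j for all x ∈ ℝ^{(n)}. In particular m ≤ n, and 𝔾-equivariant maps ℝ^{(n)} → ℝ^{(m)} correspond bijectively to strictly monotone maps Fin m → Fin n. -/

import Mathlib

/-!
Finite partial order-isomorphisms of an ordered field extend to global ones, by gluing affine
pieces. Hence `𝔾` acts transitively on `ℝ^{(n)}`, so an equivariant `f` is determined by its value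
at one tuple `x₀`. Each coordinate of `f x` is a coordinate of `x`: otherwise some `g ∈ 𝔾` fixes
every `x i` but moves that coordinate, while `f (g • x) = f x`. Reading off which coordinate of
`x₀` each coordinate of `f x₀` is gives `j`.
-/

namespace OrderIso

variable {α β : Type*} [LinearOrder α] [LinearOrder β]

noncomputable def glue (g₁ g₂ : α ≃o β) (c : α) (h : g₁ c = g₂ c) : α ≃o β :=
  StrictMono.orderIsoOfSurjective (fun t => if t ≤ c then g₁ t else g₂ t)
    (by
      intro s t hst
      dsimp only
      split_ifs with hs ht ht
      · exact g₁.strictMono hst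
      · exact (g₁.monotone hs).trans_lt (h ▸ g₂.strictMono (not_le.1 ht))
      · exact absurd (ht.trans' hst.le) hs
      · exact g₂.strictMono hst)
    (by
      intro y
      by_cases hy : y ≤ g₁ c
      · exact ⟨g₁.symm y, by simp [g₁.symm_apply_le.2 hy]⟩
      · have hc : c < g₂.symm y := g₂.lt_symm_apply.2 (h ▸ not_le.1 hy)
        exact ⟨g₂.symm y, by simp [not_le.2 hc]⟩)

variable {g₁ g₂ : α ≃o β} {c t : α} {h : g₁ c = g₂ c}

theorem glue_apply : glue g₁ g₂ c h t = if t ≤ c then g₁ t else g₂ t := rfl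

theorem glue_apply_of_le (ht : t ≤ c) : glue g₁ g₂ c h t = g₁ t := by
  rw [glue_apply, if_pos ht]

theorem glue_apply_of_ge (ht : c ≤ t) : glue g₁ g₂ c h t = g₂ t := by
  rcases ht.eq_or_lt with rfl | ht
  · rwa [glue_apply_of_le le_rfl]
  · rw [glue_apply, if_neg (not_le.2 ht)]

end OrderIso

theorem Finset.exists_lt_forall_lt_imp_lt {α : Type*} [LinearOrder α] [DenselyOrdered α]
    [NoMinOrder α] (s : Finset α) (v : α) : ∃ u < v, ∀ t ∈ s, t < v → t < u := by
  obtain ⟨w, hwv⟩ := exists_lt v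
  let S := insert w (s.filter (· < v))
  have hS : S.max' (insert_nonempty _ _) < v := (S.max'_lt_iff _).2 (by simp [S, hwv])
  obtain ⟨u, hSu, huv⟩ := _root_.exists_between hS
  exact ⟨u, huv, fun t ht htv => (S.le_max' t (by simp [S, ht, htv])).trans_lt hSu⟩

section LinearOrderedField

variable {K : Type*} [Field K] [LinearOrder K] [IsStrictOrderedRing K]

theorem exists_orderIso_apply_eq_apply_eq {a b a' b' : K} (h : a < b) (h' : a' < b') :
    ∃ g : K ≃o K, g a = a' ∧ g b = b' := by
  have hslope : 0 < (b' - a') / (b - a) := div_pos (sub_pos.2 h') (sub_pos.2 h)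
  refine ⟨(OrderIso.addRight (-a)).trans
    ((OrderIso.mulLeft₀ _ hslope).trans (OrderIso.addRight a')), ?_, ?_⟩
  · simp
  · simp [← sub_eq_add_neg, div_mul_cancel₀ _ (sub_ne_zero.2 h.ne')]

theorem exists_orderIso_eqOn_of_strictMonoOn (s : Finset K) {φ : K → K}
    (hφ : StrictMonoOn φ s) : ∃ g : K ≃o K, Set.EqOn g φ s := by
  induction s using Finset.induction_on_max with
  | empty => exact ⟨OrderIso.refl K, by simp⟩
  | insert a s has ih =>
    obtain ⟨g, hg⟩ := ih (hφ.mono (by simp))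
    rcases s.eq_empty_or_nonempty with rfl | hne
    · exact ⟨OrderIso.addRight (φ a - a), by simp⟩
    · set c := s.max' hne
      have hc : c ∈ s := s.max'_mem hne
      have hca : c < a := has c hc
      obtain ⟨A, hAc, hAa⟩ :=
        exists_orderIso_apply_eq_apply_eq hca (hφ (by simp [hc]) (by simp) hca)
      refine ⟨OrderIso.glue g A c (by rw [hg hc, hAc]), fun t ht => ?_⟩
      rcases Finset.mem_insert.1 ht with rfl | ht
      · rw [OrderIso.glue_apply_of_ge hca.le, hAa]
      · rw [OrderIso.glue_apply_of_le (s.le_max' t ht), hg ht]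

theorem exists_orderIso_comp_eq {ι : Type*} [Fintype ι] [LinearOrder ι] {x y : ι → K}
    (hx : StrictMono x) (hy : StrictMono y) : ∃ g : K ≃o K, g ∘ x = y := by
  have hφ : StrictMonoOn (Function.extend x y id) (Finset.univ.image x) := by
    simp only [Finset.coe_image, Finset.coe_univ, Set.image_univ]
    rintro _ ⟨i, rfl⟩ _ ⟨j, rfl⟩ hij
    simpa only [hx.injective.extend_apply] using hy (hx.lt_iff_lt.1 hij)
  obtain ⟨g, hg⟩ := exists_orderIso_eqOn_of_strictMonoOn _ hφ
  exact ⟨g, funext fun i => (hg (by simp)).trans (hx.injective.extend_apply y id i)⟩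

theorem exists_orderIso_eqOn_id_ne (s : Finset K) {v : K} (hv : v ∉ s) :
    ∃ g : K ≃o K, Set.EqOn g id s ∧ g v ≠ v := by
  obtain ⟨u, huv, hu⟩ := s.exists_lt_forall_lt_imp_lt v
  have hφ : StrictMonoOn (Function.update id v u) ↑(insert v s) := by
    intro t₁ ht₁ t₂ ht₂ hlt
    simp only [Function.update_apply, id]
    split_ifs with h₁ h₂ h₂
    · exact absurd (h₁.trans h₂.symm) hlt.ne
    · subst h₁
      exact huv.trans hlt
    · subst h₂
      exact hu t₁ (Finset.mem_of_mem_insert_of_ne ht₁ h₁) hlt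
    · exact hlt
  obtain ⟨g, hg⟩ := exists_orderIso_eqOn_of_strictMonoOn _ hφ
  refine ⟨g, fun t ht => ?_, ?_⟩
  · rw [hg (by simp [ht]), Function.update_of_ne (ne_of_mem_of_not_mem ht hv)]
  · rw [hg (by simp), Function.update_self]
    exact huv.ne

end LinearOrderedField

def OrderEquivariant {K : Type*} [LinearOrder K] {n m : ℕ}
    (f : {x : Fin n → K // StrictMono x} → {y : Fin m → K // StrictMono y}) : Prop :=
  ∀ (g : K ≃o K) (x : {x : Fin n → K // StrictMono x}),
    (f ⟨fun i => g (x.1 i), g.strictMono.comp x.2⟩).1 = fun i => g ((f x).1 i)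

namespace OrderEquivariant

variable {K : Type*} [LinearOrder K] {n m : ℕ}
  {f : {x : Fin n → K // StrictMono x} → {y : Fin m → K // StrictMono y}}

theorem apply_eq_comp (hf : OrderEquivariant f) {g : K ≃o K}
    {x y : {x : Fin n → K // StrictMono x}} (h : g ∘ x.1 = y.1) : (f y).1 = g ∘ (f x).1 := by
  obtain rfl : y = ⟨g ∘ x.1, g.strictMono.comp x.2⟩ := Subtype.ext h.symm
  exact hf g x

variable [Field K] [IsStrictOrderedRing K]

theorem apply_mem_range (hf : OrderEquivariant f) (x : {x : Fin n → K // StrictMono x})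
    (k : Fin m) : (f x).1 k ∈ Set.range x.1 := by
  by_contra hv
  obtain ⟨g, hgx, hgv⟩ := exists_orderIso_eqOn_id_ne (Finset.univ.image x.1) (by simpa using hv)
  exact hgv (congrFun (hf.apply_eq_comp (funext fun i => hgx (by simp))) k).symm

theorem existsUnique_eq_comp (hf : OrderEquivariant f) :
    ∃! j : Fin m → Fin n,
      StrictMono j ∧ ∀ x : {x : Fin n → K // StrictMono x}, (f x).1 = x.1 ∘ j := by
  let x₀ : {x : Fin n → K // StrictMono x} :=
    ⟨fun i => (i : K), Nat.strictMono_cast.comp Fin.val_strictMono⟩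
  choose j hj using hf.apply_mem_range x₀
  have hfj : ∀ x : {x : Fin n → K // StrictMono x}, (f x).1 = x.1 ∘ j := by
    intro x
    obtain ⟨g, hg⟩ := exists_orderIso_comp_eq x₀.2 x.2
    rw [hf.apply_eq_comp hg, ← hg]
    funext k
    simp [hj]
  refine ⟨j, ⟨fun k l hkl => x₀.2.lt_iff_lt.1 ?_, hfj⟩, fun j' ⟨_, hfj'⟩ => ?_⟩
  · simpa only [hj] using (f x₀).2 hkl
  · exact x₀.2.injective.comp_left ((hfj' x₀).symm.trans (hfj x₀))

end OrderEquivariant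

/-- Every map `ℝ^{(n)} → ℝ^{(m)}` equivariant for the coordinatewise action of the
order-automorphism group of `ℝ` is the projection along a unique strictly monotone map
`Fin m → Fin n`; in particular `m ≤ n`. -/
theorem stmt_3 (n m : ℕ)
    (f : {x : Fin n → ℝ // StrictMono x} → {y : Fin m → ℝ // StrictMono y})
    (hf : ∀ (g : ℝ ≃o ℝ) (x : {x : Fin n → ℝ // StrictMono x}),
      (f ⟨fun i => g (x.1 i), g.strictMono.comp x.2⟩).1 = fun i => g ((f x).1 i)) :
    (∃! j : Fin m → Fin n, StrictMono j ∧
      ∀ x : {x : Fin n → ℝ // StrictMono x}, (f x).1 = x.1 ∘ j) ∧ m ≤ n := by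
  have h := OrderEquivariant.existsUnique_eq_comp hf
  obtain ⟨j, hj, -⟩ := h.exists
  exact ⟨h, Fin.le_of_injective j hj.injective⟩
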